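/- Let v, w : 2^N → ℝ be set functions with v(∅) = w(∅) = 0. If Σ_{i∈N} w({i}) = Σ_{i∈N} v({i}) and μ^w(A) = μ^v(A) for every A ⊆ N with |A| > 1, then w and v additively separate the same partition function: Σ_{A∈P} w(A) = Σ_{A∈P} v(A) for every partition P of N. Consequently, if n ≥ 2, for every v there exist infinitely many set functions w ≠ v additively separating the same partition function as v. -/

import Mathlib

/-!
By Möbius inversion, `w A - v A = ∑_{B ⊆ A} (μ^w B - μ^v B)`. When the Möbius inversions agree
on all sets with at least two elements (and `μ(∅) = 0`), only singletons contribute, so `w - v`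
is the modular function `A ↦ ∑_{i ∈ A} c i` with `c i = w {i} - v {i}` and `∑ i, c i = 0`.
Adding such a function does not change any sum over a partition, because each `i` lies in
exactly one block. For `n ≥ 2` there is a nonzero `c` with zero sum, and its positive integer
multiples give infinitely many distinct `w`.
-/

open Finset

/-- Möbius inversion of a set function `w` on subsets of `N = Fin n`:
`μ^w(A) = ∑_{B ⊆ A} (−1)^{|A\B|} w(B)`. -/
def moebiusInv (n : ℕ) (w : Finset (Fin n) → ℝ) (A : Finset (Fin n)) : ℝ :=
  ∑ B ∈ A.powerset, (-1 : ℝ) ^ (A \ B).card * w B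

/-- `P` is a partition of `N = Fin n`: a family of nonempty pairwise disjoint
subsets of `N` whose union is `N`. -/
def IsPartition (n : ℕ) (P : Finset (Finset (Fin n))) : Prop :=
  ∅ ∉ P ∧ (∀ A ∈ P, ∀ B ∈ P, A ≠ B → Disjoint A B) ∧ P.biUnion id = univ

lemma sum_Icc_neg_one_pow_card_sdiff {α R : Type*} [DecidableEq α] [Ring R] {C A : Finset α}
    (hCA : C ⊆ A) : ∑ B ∈ Icc C A, (-1 : R) ^ #(B \ C) = if C = A then 1 else 0 := by
  have hdisj : ∀ D ∈ (A \ C).powerset, Disjoint C D := fun D hD =>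
    disjoint_sdiff.mono_right (mem_powerset.1 hD)
  rw [Icc_eq_image_powerset hCA, sum_image fun D₁ h₁ D₂ h₂ h => by
    rw [← union_sdiff_cancel_left (hdisj D₁ h₁), ← union_sdiff_cancel_left (hdisj D₂ h₂)]
    exact congrArg (· \ C) h]
  rw [sum_congr rfl fun D hD => by rw [union_sdiff_cancel_left (hdisj D hD)]]
  have hsum : ∑ D ∈ (A \ C).powerset, (-1 : R) ^ #D = if A \ C = ∅ then 1 else 0 := by
    simpa using congrArg (Int.cast : ℤ → R) (sum_powerset_neg_one_pow_card (x := A \ C))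
  rw [hsum]
  exact if_congr (sdiff_eq_empty_iff_subset.trans ⟨hCA.antisymm, (·.ge)⟩) rfl rfl

theorem sum_powerset_moebiusInv (n : ℕ) (w : Finset (Fin n) → ℝ) (A : Finset (Fin n)) :
    ∑ B ∈ A.powerset, moebiusInv n w B = w A := by
  calc ∑ B ∈ A.powerset, moebiusInv n w B
      = ∑ C ∈ A.powerset, ∑ B ∈ Icc C A, (-1 : ℝ) ^ #(B \ C) * w C := by
        unfold moebiusInv
        exact sum_comm' fun B C => by
          simp only [mem_powerset, mem_Icc]
          exact ⟨fun h => ⟨⟨h.2, h.1⟩, h.2.trans h.1⟩, fun h => ⟨h.1.2, h.1.1⟩⟩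
    _ = ∑ C ∈ A.powerset, if C = A then w C else 0 := sum_congr rfl fun C hC => by
        rw [← sum_mul, sum_Icc_neg_one_pow_card_sdiff (mem_powerset.1 hC), ite_mul, one_mul,
          zero_mul]
    _ = w A := by simp

lemma moebiusInv_sub (n : ℕ) (w v : Finset (Fin n) → ℝ) (A : Finset (Fin n)) :
    moebiusInv n (w - v) A = moebiusInv n w A - moebiusInv n v A := by
  simp only [moebiusInv, Pi.sub_apply, mul_sub, sum_sub_distrib]

lemma moebiusInv_empty (n : ℕ) (w : Finset (Fin n) → ℝ) : moebiusInv n w ∅ = w ∅ := by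
  simp [moebiusInv]

lemma moebiusInv_singleton (n : ℕ) {w : Finset (Fin n) → ℝ} (hw : w ∅ = 0) (i : Fin n) :
    moebiusInv n w {i} = w {i} := by
  rw [moebiusInv, ← insert_empty_eq, sum_powerset_insert (notMem_empty i)]
  simp [hw]

theorem eq_sum_singleton_of_moebiusInv_eq_zero (n : ℕ) {d : Finset (Fin n) → ℝ} (hd : d ∅ = 0)
    (hμ : ∀ A : Finset (Fin n), 1 < #A → moebiusInv n d A = 0) (A : Finset (Fin n)) :
    d A = ∑ i ∈ A, d {i} := by
  have hvanish : ∀ B ∈ A.powerset, B ∉ A.powersetCard 1 → moebiusInv n d B = 0 := by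
    intro B hB hB1
    have hcard : #B ≠ 1 := fun h => hB1 (mem_powersetCard.2 ⟨mem_powerset.1 hB, h⟩)
    obtain hB0 | hlt : #B = 0 ∨ 1 < #B := by omega
    · rw [card_eq_zero.1 hB0, moebiusInv_empty, hd]
    · exact hμ B hlt
  have hsub : A.powersetCard 1 ⊆ A.powerset := fun B hB =>
    mem_powerset.2 (mem_powersetCard.1 hB).1
  rw [← sum_powerset_moebiusInv n d A, ← sum_subset hsub hvanish, powersetCard_one, sum_map]
  exact sum_congr rfl fun i _ => moebiusInv_singleton n hd i

lemma IsPartition.sum_sum_eq_sum {n : ℕ} {P : Finset (Finset (Fin n))}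
    (hP : IsPartition n P) {β : Type*} [AddCommMonoid β] (f : Fin n → β) :
    ∑ A ∈ P, ∑ i ∈ A, f i = ∑ i, f i := by
  rw [← hP.2.2, sum_biUnion (t := id) fun A hA B hB => hP.2.1 A hA B hB]
  rfl

/-- `w` and `v` additively separate the same partition function. -/
def SameSeparation (n : ℕ) (w v : Finset (Fin n) → ℝ) : Prop :=
  ∀ P : Finset (Finset (Fin n)), IsPartition n P → ∑ A ∈ P, w A = ∑ A ∈ P, v A

theorem sameSeparation_of_eq_add_sum {n : ℕ} {w v : Finset (Fin n) → ℝ} {c : Fin n → ℝ}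
    (hwv : ∀ A, w A = v A + ∑ i ∈ A, c i) (hc : ∑ i, c i = 0) : SameSeparation n w v :=
    fun P hP => by
  rw [sum_congr rfl fun A _ => hwv A, sum_add_distrib, hP.sum_sum_eq_sum, hc, add_zero]

theorem sameSeparation_of_moebiusInv_eq {n : ℕ} {v w : Finset (Fin n) → ℝ} (hv : v ∅ = 0)
    (hw : w ∅ = 0) (hsingle : ∑ i, w {i} = ∑ i, v {i})
    (hμ : ∀ A : Finset (Fin n), 1 < #A → moebiusInv n w A = moebiusInv n v A) :
    SameSeparation n w v := by
  have hdiff : ∀ A, w A = v A + ∑ i ∈ A, (w {i} - v {i}) := fun A => by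
    have := eq_sum_singleton_of_moebiusInv_eq_zero n (d := w - v) (by simp [hv, hw])
      (fun A hA => by rw [moebiusInv_sub, hμ A hA, sub_self]) A
    simp only [Pi.sub_apply] at this
    linarith
  exact sameSeparation_of_eq_add_sum hdiff (by rw [sum_sub_distrib, hsingle, sub_self])

theorem infinite_sameSeparation {n : ℕ} (v : Finset (Fin n) → ℝ) (hv : v ∅ = 0) {c : Fin n → ℝ}
    (hc₀ : c ≠ 0) (hc : ∑ i, c i = 0) :
    {w | w ∅ = 0 ∧ w ≠ v ∧ SameSeparation n w v}.Infinite := by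
  obtain ⟨j, hj⟩ := Function.ne_iff.1 hc₀
  let w : ℕ → Finset (Fin n) → ℝ := fun k A => v A + ∑ i ∈ A, ((k : ℝ) + 1) * c i
  have hw_j : ∀ k, w k {j} = v {j} + ((k : ℝ) + 1) * c j := fun k => by
    simp only [w, sum_singleton]
  refine Set.infinite_of_injective_forall_mem (f := w) (fun k l hkl => ?_) fun k => ⟨?_, ?_, ?_⟩
  · have := congrFun hkl {j}
    rw [hw_j, hw_j, add_right_inj, mul_left_inj' hj] at this
    exact_mod_cast add_right_cancel this
  · simp [w, hv]
  · intro h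
    have := congrFun h {j}
    rw [hw_j, add_eq_left] at this
    exact mul_ne_zero (by positivity) hj this
  · exact sameSeparation_of_eq_add_sum (fun A => rfl) (by rw [← mul_sum, hc, mul_zero])

lemma exists_ne_zero_sum_eq_zero {ι R : Type*} [Fintype ι] [DecidableEq ι] [Nontrivial ι]
    [Ring R] [Nontrivial R] : ∃ c : ι → R, c ≠ 0 ∧ ∑ i, c i = 0 := by
  obtain ⟨i, j, hij⟩ := exists_pair_ne ι
  refine ⟨Pi.single i 1 - Pi.single j 1, fun h => ?_, by simp⟩
  simpa [hij] using congrFun h i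

/-- if `v(∅) = w(∅) = 0`, `∑_i w({i}) = ∑_i v({i})` and
`μ^w(A) = μ^v(A)` for every `A` with `|A| > 1`, then `w` and `v` additively
separate the same partition function: `∑_{A∈P} w(A) = ∑_{A∈P} v(A)` for every
partition `P` of `N`.  Consequently, if `n ≥ 2`, for every `v` there are
infinitely many set functions `w ≠ v` additively separating the same partition
function as `v`. -/
theorem same_separation_and_continuum (n : ℕ) :
    (∀ v w : Finset (Fin n) → ℝ, v ∅ = 0 → w ∅ = 0 →
      (∑ i : Fin n, w {i}) = (∑ i : Fin n, v {i}) →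
      (∀ A : Finset (Fin n), 1 < A.card → moebiusInv n w A = moebiusInv n v A) →
      ∀ P : Finset (Finset (Fin n)), IsPartition n P →
        ∑ A ∈ P, w A = ∑ A ∈ P, v A) ∧
    (2 ≤ n → ∀ v : Finset (Fin n) → ℝ, v ∅ = 0 →
      {w : Finset (Fin n) → ℝ | w ∅ = 0 ∧ w ≠ v ∧
        ∀ P : Finset (Finset (Fin n)), IsPartition n P →
          ∑ A ∈ P, w A = ∑ A ∈ P, v A}.Infinite) := by
  refine ⟨fun _ _ => sameSeparation_of_moebiusInv_eq, fun hn v hv => ?_⟩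
  have : Nontrivial (Fin n) := Fin.nontrivial_iff_two_le.2 hn
  obtain ⟨c, hc₀, hc⟩ := exists_ne_zero_sum_eq_zero (ι := Fin n) (R := ℝ)
  exact infinite_sameSeparation v hv hc₀ hc
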